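/- arXiv:2308.10353 — 2 statements merged into one kernel-verified Lean document; each statement's English description precedes it below -/
import Mathlib

section
/- Suppose (ρ_i) is an AM-bounding sequence for u : X → V with sup_i ∫_X ρ_i dμ < ∞. Then for each ε > 0 there is a strong bounding sequence (g_i) for u (i.e., the AM-bounding inequality holds along every nonconstant compact rectifiable curve, with no exceptional curve family) such that ∫_X |g_i − ρ_i| dμ < ε for each i. -/
open MeasureTheory Filter Set Metric
open scoped ENNReal NNReal Topology

noncomputable section

namespace BVAMPaper

/-- A nonconstant compact rectifiable curve in `X`, parametrized by arclength on `[0, len]`. -/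
structure Curve (X : Type*) [MetricSpace X] : Type _ where
  len : ℝ
  len_pos : 0 < len
  toFun : ℝ → X
  lip : LipschitzOnWith 1 toFun (Set.Icc 0 len)
  nonconst : ∃ s ∈ Set.Icc (0:ℝ) len, ∃ t ∈ Set.Icc (0:ℝ) len, toFun s ≠ toFun t

variable {X : Type*} [MetricSpace X]

/-- The line integral `∫_γ ρ ds` of `ρ` over the arclength-parametrized curve `γ`. -/
def Curve.integral (γ : Curve X) (ρ : X → ℝ≥0∞) : ℝ≥0∞ :=
  ∫⁻ t in Set.Icc 0 γ.len, ρ (γ.toFun t)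

/-- The line integral of `ρ` over the subcurve `γ|_{[s,t]}`. -/
def Curve.integralOn (γ : Curve X) (s t : ℝ) (ρ : X → ℝ≥0∞) : ℝ≥0∞ :=
  ∫⁻ r in Set.Icc s t, ρ (γ.toFun r)

variable [MeasurableSpace X]

/-- The 1-modulus of a family of curves. -/
def Mod1 (μ : Measure X) (Γ : Set (Curve X)) : ℝ≥0∞ :=
  ⨅ (ρ : X → ℝ≥0∞) (_ : Measurable ρ ∧ ∀ γ ∈ Γ, 1 ≤ Curve.integral γ ρ), ∫⁻ x, ρ x ∂μ

/-- A sequence admissible for the AM-modulus of `Γ`. -/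
def AMAdmissible (Γ : Set (Curve X)) (ρ : ℕ → X → ℝ≥0∞) : Prop :=
  (∀ i, Measurable (ρ i)) ∧
    ∀ γ ∈ Γ, 1 ≤ Filter.atTop.liminf fun i => Curve.integral γ (ρ i)

/-- The AM-modulus of a family of curves. -/
def AM (μ : Measure X) (Γ : Set (Curve X)) : ℝ≥0∞ :=
  ⨅ (ρ : ℕ → X → ℝ≥0∞) (_ : AMAdmissible Γ ρ),
    Filter.atTop.liminf fun i => ∫⁻ x, ρ i x ∂μ

section Target
variable {Y : Type*} [EMetricSpace Y]

/-- `g` is an upper gradient of `u`. -/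
def IsUpperGradient (u : X → Y) (g : X → ℝ≥0∞) : Prop :=
  ∀ γ : Curve X, edist (u (γ.toFun γ.len)) (u (γ.toFun 0)) ≤ Curve.integral γ g

/-- `(ρ i)` is an AM-bounding sequence for `u` relative to the set `U`. -/
def AMBoundingOn (μ : Measure X) (U : Set X) (u : X → Y) (ρ : ℕ → X → ℝ≥0∞) : Prop :=
  (∀ i, Measurable (ρ i)) ∧
    ∃ Γ : Set (Curve X), AM μ Γ = 0 ∧
      ∀ γ : Curve X, γ ∉ Γ → (∀ r ∈ Set.Icc (0:ℝ) γ.len, γ.toFun r ∈ U) →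
        ∃ N : Set ℝ, volume N = 0 ∧
          ∀ s t : ℝ, s ∈ Set.Icc (0:ℝ) γ.len → t ∈ Set.Icc (0:ℝ) γ.len →
            s ∉ N → t ∉ N → s < t →
              edist (u (γ.toFun s)) (u (γ.toFun t)) ≤
                Filter.atTop.liminf fun i => Curve.integralOn γ s t (ρ i)

/-- `(ρ i)` is an AM-bounding sequence for `u`. -/
def AMBounding (μ : Measure X) (u : X → Y) (ρ : ℕ → X → ℝ≥0∞) : Prop :=
  AMBoundingOn μ Set.univ u ρ

/-- A strong bounding sequence: the bounding inequality holds along every nonconstant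
compact rectifiable curve, with no exceptional curve family. -/
def StrongBounding (u : X → Y) (ρ : ℕ → X → ℝ≥0∞) : Prop :=
  (∀ i, Measurable (ρ i)) ∧
    ∀ γ : Curve X, ∃ N : Set ℝ, volume N = 0 ∧
      ∀ s t : ℝ, s ∈ Set.Icc (0:ℝ) γ.len → t ∈ Set.Icc (0:ℝ) γ.len →
        s ∉ N → t ∉ N → s < t →
          edist (u (γ.toFun s)) (u (γ.toFun t)) ≤
            Filter.atTop.liminf fun i => Curve.integralOn γ s t (ρ i)

/-- The AM-BV energy of `u` relative to the set `U`. -/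
def DAMOn (μ : Measure X) (u : X → Y) (U : Set X) : ℝ≥0∞ :=
  ⨅ (ρ : ℕ → X → ℝ≥0∞) (_ : AMBoundingOn μ U u ρ),
    Filter.atTop.liminf fun i => ∫⁻ x in U, ρ i x ∂μ

/-- The total AM-BV energy `‖D_AM u‖(X)`. -/
def DAM (μ : Measure X) (u : X → Y) : ℝ≥0∞ := DAMOn μ u Set.univ

/-- `‖D_AM u‖(A)` for a general set `A`, via approximation by open supersets. -/
def DAMmeas (μ : Measure X) (u : X → Y) (A : Set X) : ℝ≥0∞ :=
  ⨅ (U : Set X) (_ : IsOpen U ∧ A ⊆ U), DAMOn μ u U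

/-- `u ∈ L¹(X : Y)`. -/
def MemL1 (μ : Measure X) (u : X → Y) : Prop :=
  AEStronglyMeasurable u μ ∧ ∃ y₀ : Y, ∫⁻ x, edist (u x) y₀ ∂μ < ∞

/-- `u ∈ BV_AM(X : Y)`. -/
def MemBVAM (μ : Measure X) (u : X → Y) : Prop :=
  MemL1 μ u ∧ ∃ ρ : ℕ → X → ℝ≥0∞, AMBounding μ u ρ ∧
    (Filter.atTop.liminf fun i => ∫⁻ x, ρ i x ∂μ) < ∞

/-- `u ∈ N^{1,1}(X : Y)`. -/
def MemN11 (μ : Measure X) (u : X → Y) : Prop :=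
  MemL1 μ u ∧ ∃ g : X → ℝ≥0∞, Measurable g ∧ IsUpperGradient u g ∧ ∫⁻ x, g x ∂μ < ∞

/-- The relaxed BV energy `‖Du‖(X)` of `u`, via approximation in `L¹` by
Newton–Sobolev maps with their upper gradients. -/
def DBV (μ : Measure X) (u : X → Y) : ℝ≥0∞ :=
  ⨅ (v : ℕ → X → Y) (g : ℕ → X → ℝ≥0∞)
    (_ : (∀ k, MemL1 μ (v k) ∧ Measurable (g k) ∧ IsUpperGradient (v k) (g k)) ∧
        Tendsto (fun k => ∫⁻ x, edist (v k x) (u x) ∂μ) atTop (nhds 0)),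
    Filter.atTop.liminf fun k => ∫⁻ x, g k x ∂μ

/-- `u ∈ BV(X : Y)` via relaxation. -/
def MemBV (μ : Measure X) (u : X → Y) : Prop := MemL1 μ u ∧ DBV μ u < ∞

/-- The pointwise (upper) Lipschitz constant function. -/
def lipDeriv (u : X → Y) (x : X) : ℝ≥0∞ :=
  Filter.limsup (fun y => edist (u y) (u x) / edist y x) (𝓝[≠] x)

end Target

/-- `μ` is a doubling measure with constant `Cd`. -/
def Doubling (μ : Measure X) (Cd : ℝ≥0) : Prop :=
  ∀ (x : X) (r : ℝ), 0 < r →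
    0 < μ (ball x r) ∧ μ (ball x (2 * r)) ≤ Cd * μ (ball x r) ∧ μ (ball x (2 * r)) < ∞

/-- `X` supports a 1-Poincaré inequality with constants `C`, `lam`. -/
def Poincare (μ : Measure X) (C lam : ℝ) : Prop :=
  ∀ (f : X → ℝ) (g : X → ℝ≥0∞), LocallyIntegrable f μ → Measurable g → IsUpperGradient f g →
    ∀ (x : X) (r : ℝ), 0 < r →
      (μ (ball x r))⁻¹ * ∫⁻ y in ball x r, (‖f y - ⨍ z in ball x r, f z ∂μ‖₊ : ℝ≥0∞) ∂μ ≤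
        ENNReal.ofReal (C * r) *
          ((μ (ball x (lam * r)))⁻¹ * ∫⁻ y in ball x (lam * r), g y ∂μ)

/-- `X` supports an AM-Poincaré inequality for `V`-valued maps. -/
def AMPoincare (μ : Measure X) (V : Type*) [NormedAddCommGroup V] [NormedSpace ℝ V]
    (C lam : ℝ) : Prop :=
  ∀ (u : X → V) (ρ : ℕ → X → ℝ≥0∞), MemBVAM μ u → AMBounding μ u ρ →
    ∀ (x : X) (r : ℝ), 0 < r →
      (μ (ball x r))⁻¹ * ∫⁻ y in ball x r, (‖u y - ⨍ z in ball x r, u z ∂μ‖₊ : ℝ≥0∞) ∂μ ≤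
        ENNReal.ofReal (C * r) *
          Filter.atTop.liminf fun i =>
            (μ (ball x (lam * r)))⁻¹ * ∫⁻ y in ball x (lam * r), ρ i y ∂μ

section MetricTarget
variable {Y : Type*} [MetricSpace Y]

/-- `u` is approximately continuous at `x`. -/
def ApproxCont (μ : Measure X) (u : X → Y) (x : X) : Prop :=
  ∃ y : Y, ∀ ε : ℝ, 0 < ε →
    Filter.limsup (fun r => μ (ball x r \ u ⁻¹' ball y ε) / μ (ball x r)) (𝓝[>] (0:ℝ)) = 0

/-- The jump set of `u`: points where `u` fails to be approximately continuous. -/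
def jumpSet (μ : Measure X) (u : X → Y) : Set X := {x | ¬ ApproxCont μ u x}

end MetricTarget

/-- The codimension-one Hausdorff measure of `A` relative to `μ`. -/
def codimOne (μ : Measure X) (A : Set X) : ℝ≥0∞ :=
  ⨆ (δ : ℝ) (_ : 0 < δ),
    ⨅ (c : ℕ → X) (r : ℕ → ℝ)
      (_ : (∀ i, 0 < r i ∧ r i ≤ δ) ∧ A ⊆ ⋃ i, ball (c i) (r i)),
      ∑' i, μ (ball (c i) (r i)) / ENNReal.ofReal (r i)

/-!
Since `AM Γ = 0` for the exceptional family `Γ` of `ρ`, there are `hᵢ` with arbitrarily small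
integrals whose line integrals have `liminf = ∞` along every curve of `Γ`; `gᵢ = ρᵢ + hᵢ` is the
strong bounding sequence. On a fixed curve `γ`, each subinterval `[p, q]` either carries
`liminf ∫ hᵢ = ∞`, or the restriction of `γ` to it lies outside `Γ` (or is constant) and `ρ`
bounds `u` there off a null set. Collecting these null sets over rational `p, q` and chaining the
bounds along `[s, t]` gives the estimate for `γ`. A good rational interval around the endpoint `s`
can only be missing if `s` is the least `a` with `liminf ∫_[a, q] hᵢ < ∞` for some rational `q`
(symmetrically for `t`), so only countably many further points have to be excluded.
-/

theorem _root_.ENNReal.liminf_add_liminf_le (u v : ℕ → ℝ≥0∞) :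
    atTop.liminf u + atTop.liminf v ≤ atTop.liminf (u + v) := by
  have hmono : ∀ w : ℕ → ℝ≥0∞, Monotone fun n => ⨅ i ≥ n, w i :=
    fun w _ _ hnm => le_iInf₂ fun i hi => iInf₂_le i (hnm.trans hi)
  simp only [liminf_eq_iSup_iInf_of_nat]
  rw [ENNReal.iSup_add_iSup_of_monotone (hmono u) (hmono v)]
  exact iSup_mono fun n => le_iInf₂ fun i hi => add_le_add (iInf₂_le i hi) (iInf₂_le i hi)

theorem _root_.ENNReal.tsum_liminf_le_liminf_tsum (a : ℕ → ℕ → ℝ≥0∞) :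
    ∑' k, atTop.liminf (a k) ≤ atTop.liminf fun i => ∑' k, a k i := by
  simpa only [lintegral_count] using
    lintegral_liminf_le (μ := Measure.count) (f := fun i k => a k i) fun _ =>
      measurable_of_countable _

theorem _root_.MeasureTheory.sum_lintegral_le_lintegral_sum {α ι : Type*} [MeasurableSpace α]
    {μ : Measure α} (s : Finset ι) (f : ι → α → ℝ≥0∞) :
    ∑ k ∈ s, ∫⁻ x, f k x ∂μ ≤ ∫⁻ x, ∑ k ∈ s, f k x ∂μ := by
  induction s using Finset.cons_induction with
  | empty => simp
  | cons a s ha ih =>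
    simp only [Finset.sum_cons]
    exact (add_le_add_right ih _).trans (le_lintegral_add _ _)

theorem _root_.MeasureTheory.tsum_lintegral_le_lintegral_tsum {α ι : Type*} [MeasurableSpace α]
    {μ : Measure α} (f : ι → α → ℝ≥0∞) :
    ∑' k, ∫⁻ x, f k x ∂μ ≤ ∫⁻ x, ∑' k, f k x ∂μ := by
  rw [ENNReal.tsum_eq_iSup_sum]
  exact iSup_le fun s => (sum_lintegral_le_lintegral_sum s f).trans
    (lintegral_mono fun x => ENNReal.sum_le_tsum s)

theorem _root_.MeasureTheory.lintegral_Icc_add_lintegral_Icc (F : ℝ → ℝ≥0∞) {a b c : ℝ}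
    (hab : a ≤ b) (hbc : b ≤ c) :
    (∫⁻ r in Icc a b, F r) + ∫⁻ r in Icc b c, F r = ∫⁻ r in Icc a c, F r := by
  simp only [← setLIntegral_congr Ioc_ae_eq_Icc]
  rw [← Ioc_union_Ioc_eq_Ioc hab hbc]
  exact (lintegral_union measurableSet_Ioc (Ioc_disjoint_Ioc_of_le le_rfl)).symm

theorem _root_.MeasureTheory.lintegral_Icc_comp_add_right (F : ℝ → ℝ≥0∞) (a s t : ℝ) :
    ∫⁻ r in Icc s t, F (r + a) = ∫⁻ r in Icc (s + a) (t + a), F r := by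
  rw [(measurePreserving_add_right volume a).setLIntegral_comp_emb
    (measurableEmbedding_addRight a) F, image_add_const_Icc]

theorem exists_seq_liminf_integral_eq_top_of_AM_eq_zero {X : Type*} [MetricSpace X]
    [MeasurableSpace X] {μ : Measure X} {Γ : Set (Curve X)} (hΓ : AM μ Γ = 0) {c : ℝ≥0∞}
    (hc : c ≠ 0) :
    ∃ h : ℕ → X → ℝ≥0∞, (∀ i, Measurable (h i)) ∧ (∀ i, ∫⁻ x, h i x ∂μ < c) ∧
      ∀ γ ∈ Γ, atTop.liminf (fun i => γ.integral (h i)) = ⊤ := by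
  obtain ⟨δ, hδ0, hδc⟩ := ENNReal.exists_pos_sum_of_countable' hc ℕ
  have hsmall : ∀ k, ∃ σ : ℕ → X → ℝ≥0∞, AMAdmissible Γ σ ∧
      (atTop.liminf fun i => ∫⁻ x, σ i x ∂μ) < δ k := by
    intro k
    have : AM μ Γ < δ k := hΓ ▸ hδ0 k
    simpa only [AM, iInf_lt_iff, exists_prop] using this
  choose σ hσadm hσlt using hsmall
  have hsub : ∀ k, ∃ φ : ℕ → ℕ, StrictMono φ ∧ ∀ i, ∫⁻ x, σ k (φ i) x ∂μ < δ k :=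
    fun k => extraction_of_frequently_atTop
      (frequently_lt_of_liminf_lt (by isBoundedDefault) (hσlt k))
  choose φ hφ hφlt using hsub
  have hmeas : ∀ k i, Measurable (σ k (φ k i)) := fun k i => (hσadm k).1 _
  refine ⟨fun i x => ∑' k, σ k (φ k i) x, fun i => Measurable.tsum fun k => hmeas k i,
    fun i => ?_, fun γ hγ => ?_⟩
  · rw [lintegral_tsum fun k => (hmeas k i).aemeasurable]
    exact (ENNReal.tsum_le_tsum fun k => (hφlt k i).le).trans_lt hδc
  · have hone : ∀ k, 1 ≤ atTop.liminf fun i => γ.integral (σ k (φ k i)) :=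
      fun k => ((hσadm k).2 γ hγ).trans ((hφ k).tendsto_atTop.liminf_le_liminf_comp)
    refine top_le_iff.mp ?_
    calc (⊤ : ℝ≥0∞) = ∑' _ : ℕ, 1 := (ENNReal.tsum_const_eq_top_of_ne_zero one_ne_zero).symm
      _ ≤ ∑' k, atTop.liminf fun i => γ.integral (σ k (φ k i)) := ENNReal.tsum_le_tsum hone
      _ ≤ atTop.liminf fun i => ∑' k, γ.integral (σ k (φ k i)) :=
        ENNReal.tsum_liminf_le_liminf_tsum _
      _ ≤ _ := liminf_le_liminf (.of_forall fun i => tsum_lintegral_le_lintegral_tsum _)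

section RealLine

variable {Y : Type*} [PseudoEMetricSpace Y]

def liminfIcc (f : ℕ → ℝ → ℝ≥0∞) (a b : ℝ) : ℝ≥0∞ :=
  atTop.liminf fun i => ∫⁻ r in Icc a b, f i r

theorem liminfIcc_mono (f : ℕ → ℝ → ℝ≥0∞) {a b c d : ℝ} (hca : c ≤ a) (hbd : b ≤ d) :
    liminfIcc f a b ≤ liminfIcc f c d :=
  liminf_le_liminf (.of_forall fun _ => lintegral_mono_set (Icc_subset_Icc hca hbd))

theorem liminfIcc_le_add_left (f g : ℕ → ℝ → ℝ≥0∞) (a b : ℝ) :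
    liminfIcc f a b ≤ liminfIcc (f + g) a b :=
  liminf_le_liminf (.of_forall fun _ => lintegral_mono fun _ => le_self_add)

theorem liminfIcc_le_add_right (f g : ℕ → ℝ → ℝ≥0∞) (a b : ℝ) :
    liminfIcc g a b ≤ liminfIcc (f + g) a b :=
  liminf_le_liminf (.of_forall fun _ => lintegral_mono fun _ => le_add_self)

theorem liminfIcc_add_liminfIcc_le (f : ℕ → ℝ → ℝ≥0∞) {a b c : ℝ} (hab : a ≤ b) (hbc : b ≤ c) :
    liminfIcc f a b + liminfIcc f b c ≤ liminfIcc f a c := by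
  refine (ENNReal.liminf_add_liminf_le _ _).trans_eq ?_
  congr 1
  ext i
  exact lintegral_Icc_add_lintegral_Icc (f i) hab hbc

def IsBoundingOn (w : ℝ → Y) (f : ℕ → ℝ → ℝ≥0∞) (a b : ℝ) : Prop :=
  ∃ N : Set ℝ, volume N = 0 ∧
    ∀ s t : ℝ, s ∈ Icc a b → t ∈ Icc a b → s ∉ N → t ∉ N → s < t →
      edist (w s) (w t) ≤ liminfIcc f s t

theorem rel_of_locally_rel {R : ℝ → ℝ → Prop} {N : Set ℝ} (hN : Dense Nᶜ)
    (hrefl : ∀ x, R x x) (htrans : ∀ x y z, x ≤ y → y ≤ z → R x y → R y z → R x z)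
    {s t : ℝ} (hst : s ≤ t) (hs : s ∉ N) (ht : t ∉ N)
    (hloc : ∀ z ∈ Icc s t, ∃ p < z, ∃ q > z,
      ∀ x ∈ Icc p q, ∀ y ∈ Icc p q, x ∉ N → y ∉ N → x < y → R x y) :
    R s t := by
  set A := {x ∈ Icc s t | x ∉ N ∧ R s x}
  have hsA : s ∈ A := ⟨⟨le_rfl, hst⟩, hs, hrefl s⟩
  have hA : BddAbove A := ⟨t, fun x hx => hx.1.2⟩
  set c := sSup A
  have hsc : s ≤ c := le_csSup hA hsA
  have hct : c ≤ t := csSup_le ⟨s, hsA⟩ fun x hx => hx.1.2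
  obtain ⟨p, hpc, q, hcq, hpq⟩ := hloc c ⟨hsc, hct⟩
  obtain ⟨x, hxA, hpx⟩ := exists_lt_of_lt_csSup ⟨s, hsA⟩ hpc
  have hxc : x ≤ c := le_csSup hA hxA
  have hextend : ∀ y ∈ Icc c t, y < q → y ∉ N → y ∈ A := by
    intro y hy hyq hyN
    refine ⟨⟨hsc.trans hy.1, hy.2⟩, hyN, ?_⟩
    rcases (hxc.trans hy.1).eq_or_lt with rfl | hxy
    · exact hxA.2.2
    exact htrans s x y hxA.1.1 hxy.le hxA.2.2
      (hpq x ⟨hpx.le, hxc.trans hcq.le⟩ y ⟨hpx.le.trans hxy.le, hyq.le⟩ hxA.2.1 hyN hxy)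
  have hct' : c = t := by
    by_contra hne
    obtain ⟨y, hyN, hy⟩ := hN.exists_between (lt_min (hct.lt_of_ne hne) hcq)
    have hyA := hextend y ⟨hy.1.le, hy.2.le.trans (min_le_left _ _)⟩
      (hy.2.trans_le (min_le_right _ _)) hyN
    exact (le_csSup hA hyA).not_gt hy.1
  exact (hextend t ⟨hct'.le, le_rfl⟩ (hct' ▸ hcq) ht).2.2

def finitenessEndpoints (g : ℕ → ℝ → ℝ≥0∞) : Set ℝ :=
  (⋃ q : ℚ, {s | IsLeast {a | liminfIcc g a q ≠ ⊤} s}) ∪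
    ⋃ p : ℚ, {t | IsGreatest {b | liminfIcc g p b ≠ ⊤} t}

theorem volume_finitenessEndpoints (g : ℕ → ℝ → ℝ≥0∞) :
    volume (finitenessEndpoints g) = 0 := by
  simp only [finitenessEndpoints, measure_union_null_iff, measure_iUnion_null_iff]
  exact ⟨fun _ => Subsingleton.measure_zero (fun _ ha _ hb => ha.unique hb) _,
    fun _ => Subsingleton.measure_zero (fun _ ha _ hb => ha.unique hb) _⟩

theorem exists_rat_liminfIcc_ne_top (g : ℕ → ℝ → ℝ≥0∞) {L s t : ℝ} (hs0 : 0 < s) (hst : s < t)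
    (htL : t < L) (hg : liminfIcc g s t ≠ ⊤)
    (hs : s ∉ finitenessEndpoints g) (ht : t ∉ finitenessEndpoints g) :
    ∀ z ∈ Icc s t, ∃ p q : ℚ, 0 ≤ (p : ℝ) ∧ (p : ℝ) < z ∧ z < q ∧ (q : ℝ) ≤ L ∧
      liminfIcc g p q ≠ ⊤ := by
  intro z hz
  obtain rfl | hsz := hz.1.eq_or_lt
  · obtain ⟨q, hsq, hqt⟩ := exists_rat_btwn hst
    have hmem : s ∈ {a | liminfIcc g a q ≠ ⊤} :=
      ne_top_of_le_ne_top hg (liminfIcc_mono g le_rfl hqt.le)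
    have hlb : s ∉ lowerBounds {a | liminfIcc g a q ≠ ⊤} := fun hlb =>
      hs (.inl (mem_iUnion.2 ⟨q, hmem, hlb⟩))
    simp only [mem_lowerBounds, not_forall, not_le, exists_prop] at hlb
    obtain ⟨a, ha, has⟩ := hlb
    obtain ⟨p, hap, hps⟩ := exists_rat_btwn (max_lt has hs0)
    exact ⟨p, q, (le_max_right _ _).trans hap.le, hps, hsq, hqt.le.trans htL.le,
      ne_top_of_le_ne_top ha (liminfIcc_mono g ((le_max_left _ _).trans hap.le) le_rfl)⟩
  obtain rfl | hzt := hz.2.eq_or_lt.imp_left Eq.symm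
  · obtain ⟨p, hsp, hpt⟩ := exists_rat_btwn hst
    have hmem : t ∈ {b | liminfIcc g p b ≠ ⊤} :=
      ne_top_of_le_ne_top hg (liminfIcc_mono g hsp.le le_rfl)
    have hub : t ∉ upperBounds {b | liminfIcc g p b ≠ ⊤} := fun hub =>
      ht (.inr (mem_iUnion.2 ⟨p, hmem, hub⟩))
    simp only [mem_upperBounds, not_forall, not_le, exists_prop] at hub
    obtain ⟨b, hb, htb⟩ := hub
    obtain ⟨q, htq, hqb⟩ := exists_rat_btwn (lt_min htb htL)
    exact ⟨p, q, hs0.le.trans hsp.le, hpt, htq, hqb.le.trans (min_le_right _ _),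
      ne_top_of_le_ne_top hb (liminfIcc_mono g le_rfl (hqb.le.trans (min_le_left _ _)))⟩
  obtain ⟨p, hsp, hpz⟩ := exists_rat_btwn hsz
  obtain ⟨q, hzq, hqt⟩ := exists_rat_btwn hzt
  exact ⟨p, q, hs0.le.trans hsp.le, hpz, hzq, hqt.le.trans htL.le,
    ne_top_of_le_ne_top hg (liminfIcc_mono g hsp.le hqt.le)⟩

theorem isBoundingOn_add_of_forall_Icc (w : ℝ → Y) (f g : ℕ → ℝ → ℝ≥0∞) {L : ℝ}
    (h : ∀ p q, 0 ≤ p → p < q → q ≤ L → liminfIcc g p q = ⊤ ∨ IsBoundingOn w f p q) :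
    IsBoundingOn w (f + g) 0 L := by
  have hrat : ∀ p q : ℚ, ∃ N : Set ℝ, volume N = 0 ∧
      (0 ≤ (p : ℝ) → (p : ℝ) < q → (q : ℝ) ≤ L → liminfIcc g p q ≠ ⊤ →
        ∀ x ∈ Icc (p : ℝ) q, ∀ y ∈ Icc (p : ℝ) q, x ∉ N → y ∉ N → x < y →
          edist (w x) (w y) ≤ liminfIcc f x y) := by
    intro p q
    by_cases hpq : 0 ≤ (p : ℝ) ∧ (p : ℝ) < q ∧ (q : ℝ) ≤ L ∧ liminfIcc g p q ≠ ⊤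
    · obtain ⟨N, hN, hbound⟩ := (h p q hpq.1 hpq.2.1 hpq.2.2.1).resolve_left hpq.2.2.2
      exact ⟨N, hN, fun _ _ _ _ x hx y hy => hbound x y hx hy⟩
    · exact ⟨∅, measure_empty, fun h0 h1 h2 h3 => absurd ⟨h0, h1, h2, h3⟩ hpq⟩
  choose N₁ hN₁ hbound using hrat
  set N := ({0, L} ∪ ⋃ p : ℚ, ⋃ q : ℚ, N₁ p q) ∪ finitenessEndpoints g
  have hN : volume N = 0 := by
    simp only [N, measure_union_null_iff, measure_iUnion_null_iff]
    exact ⟨⟨(toFinite _).measure_zero _, hN₁⟩, volume_finitenessEndpoints g⟩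
  refine ⟨N, hN, fun s t hs ht hsN htN hst => ?_⟩
  by_cases hg : liminfIcc g s t = ⊤
  · exact le_top.trans (hg ▸ liminfIcc_le_add_right f g s t)
  refine le_trans ?_ (liminfIcc_le_add_left f g s t)
  have hs0 : 0 < s := hs.1.lt_of_ne fun h => hsN (by simp [N, ← h])
  have htL : t < L := ht.2.lt_of_ne fun h => htN (by simp [N, h])
  have hloc := exists_rat_liminfIcc_ne_top g hs0 hst htL hg (fun h => hsN (.inr h))
    (fun h => htN (.inr h))
  refine rel_of_locally_rel (R := fun x y => edist (w x) (w y) ≤ liminfIcc f x y)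
    (interior_eq_empty_iff_dense_compl.mp (Measure.interior_eq_empty_of_null hN))
    (fun x => by simp) (fun x y z hxy hyz hxy' hyz' => (edist_triangle _ _ _).trans
      ((add_le_add hxy' hyz').trans (liminfIcc_add_liminfIcc_le f hxy hyz)))
    hst.le hsN htN fun z hz => ?_
  obtain ⟨p, q, hp0, hpz, hzq, hqL, hpq⟩ := hloc z hz
  have hN₁N : N₁ p q ⊆ N := fun x hx => Or.inl (Or.inr (mem_iUnion₂.2 ⟨p, q, hx⟩))
  exact ⟨p, hpz, q, hzq, fun x hx y hy hxN hyN =>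
    hbound p q hp0 (hpz.trans hzq) hqL hpq x hx y hy (fun h => hxN (hN₁N h))
      (fun h => hyN (hN₁N h))⟩

end RealLine

section Curves

variable {X : Type*} [MetricSpace X]

def Curve.restrict (γ : Curve X) (a b : ℝ) (ha : 0 ≤ a) (hab : a < b) (hb : b ≤ γ.len)
    (hnc : ∃ x ∈ Icc a b, ∃ y ∈ Icc a b, γ.toFun x ≠ γ.toFun y) : Curve X where
  len := b - a
  len_pos := sub_pos.mpr hab
  toFun r := γ.toFun (r + a)
  lip r hr r' hr' := by
    simpa only [edist_add_right] using γ.lip (x := r + a) (y := r' + a)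
      ⟨by linarith [hr.1], by linarith [hr.2]⟩ ⟨by linarith [hr'.1], by linarith [hr'.2]⟩
  nonconst := by
    obtain ⟨x, hx, y, hy, hxy⟩ := hnc
    exact ⟨x - a, ⟨by linarith [hx.1], by linarith [hx.2]⟩, y - a,
      ⟨by linarith [hy.1], by linarith [hy.2]⟩, by simpa using hxy⟩

theorem Curve.restrict_integral (γ : Curve X) {a b : ℝ} (ha : 0 ≤ a) (hab : a < b)
    (hb : b ≤ γ.len) (hnc : ∃ x ∈ Icc a b, ∃ y ∈ Icc a b, γ.toFun x ≠ γ.toFun y)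
    (ρ : X → ℝ≥0∞) : (γ.restrict a b ha hab hb hnc).integral ρ = γ.integralOn a b ρ := by
  show ∫⁻ r in Icc 0 (b - a), ρ (γ.toFun (r + a)) = ∫⁻ r in Icc a b, ρ (γ.toFun r)
  simpa only [zero_add, sub_add_cancel] using
    lintegral_Icc_comp_add_right (fun r => ρ (γ.toFun r)) a 0 (b - a)

theorem Curve.eq_top_or_isBoundingOn {Y : Type*} [EMetricSpace Y] (u : X → Y)
    (ρ h : ℕ → X → ℝ≥0∞) {Γ : Set (Curve X)}
    (hΓ : ∀ γ ∈ Γ, atTop.liminf (fun i => γ.integral (h i)) = ⊤)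
    (hρ : ∀ γ ∉ Γ, IsBoundingOn (u ∘ γ.toFun) (fun i r => ρ i (γ.toFun r)) 0 γ.len)
    (γ : Curve X) {p q : ℝ} (hp : 0 ≤ p) (hpq : p < q) (hq : q ≤ γ.len) :
    liminfIcc (fun i r => h i (γ.toFun r)) p q = ⊤ ∨
      IsBoundingOn (u ∘ γ.toFun) (fun i r => ρ i (γ.toFun r)) p q := by
  by_cases hnc : ∃ x ∈ Icc p q, ∃ y ∈ Icc p q, γ.toFun x ≠ γ.toFun y
  swap
  · push Not at hnc
    exact .inr ⟨∅, measure_empty, fun s t hs ht _ _ _ => by simp [hnc s hs t ht]⟩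
  set γ' := γ.restrict p q hp hpq hq hnc
  by_cases hγ' : γ' ∈ Γ
  · have := hΓ γ' hγ'
    simp only [γ', γ.restrict_integral] at this
    exact .inl this
  obtain ⟨N, hN, hbound⟩ := hρ γ' hγ'
  refine .inr ⟨(· - p) ⁻¹' N,
    (measurePreserving_sub_right volume p).quasiMeasurePreserving.preimage_null hN,
    fun s t hs ht hsN htN hst => ?_⟩
  have hshift : ∀ i, ∫⁻ r in Icc (s - p) (t - p), ρ i (γ.toFun (r + p)) =
      ∫⁻ r in Icc s t, ρ i (γ.toFun r) := fun i => by
    simpa only [sub_add_cancel] using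
      lintegral_Icc_comp_add_right (fun r => ρ i (γ.toFun r)) p (s - p) (t - p)
  have := hbound (s - p) (t - p) ⟨by linarith [hs.1], (by linarith [hs.2] : s - p ≤ q - p)⟩
    ⟨by linarith [ht.1], (by linarith [ht.2] : t - p ≤ q - p)⟩ hsN htN (by linarith)
  simpa only [γ', Curve.restrict, liminfIcc, Function.comp_apply, sub_add_cancel, hshift]
    using this

end Curves

theorem statement8_general {X : Type*} [MetricSpace X] [MeasurableSpace X] (μ : Measure X)
    {V : Type*} [NormedAddCommGroup V]
    (u : X → V) (ρ : ℕ → X → ℝ≥0∞)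
    (hρ : AMBounding μ u ρ) :
    ∀ ε : ℝ, 0 < ε → ∃ g : ℕ → X → ℝ≥0∞, StrongBounding u g ∧
      ∀ i, ∫⁻ x, ((g i x - ρ i x) + (ρ i x - g i x)) ∂μ < ENNReal.ofReal ε := by
  intro ε hε
  obtain ⟨hρmeas, Γ, hΓ, hbound⟩ := hρ
  obtain ⟨h, hmeas, hint, hΓh⟩ :=
    exists_seq_liminf_integral_eq_top_of_AM_eq_zero hΓ (ENNReal.ofReal_pos.2 hε).ne'
  refine ⟨ρ + h, ⟨fun i => (hρmeas i).add (hmeas i), fun γ => ?_⟩, fun i => ?_⟩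
  · exact isBoundingOn_add_of_forall_Icc _ _ _ fun p q hp hpq hq =>
      γ.eq_top_or_isBoundingOn u ρ h hΓh (fun γ' hγ' => hbound γ' hγ' fun _ _ => mem_univ _)
        hp hpq hq
  · calc ∫⁻ x, (((ρ + h) i x - ρ i x) + (ρ i x - (ρ + h) i x)) ∂μ ≤ ∫⁻ x, h i x ∂μ :=
          lintegral_mono fun x => by
            simp only [Pi.add_apply, tsub_eq_zero_of_le le_self_add, add_zero, add_tsub_le_left]
      _ < ENNReal.ofReal ε := hint i

/-- An AM-bounding sequence with uniformly bounded integrals can be approximated in `L¹`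
by strong bounding sequences. -/
theorem statement8 {X : Type*} [MetricSpace X] [MeasurableSpace X] (μ : Measure X)
    {V : Type*} [NormedAddCommGroup V]
    (u : X → V) (ρ : ℕ → X → ℝ≥0∞)
    (hρ : AMBounding μ u ρ)
    (hsup : (⨆ i, ∫⁻ x, ρ i x ∂μ) < ∞) :
    ∀ ε : ℝ, 0 < ε → ∃ g : ℕ → X → ℝ≥0∞, StrongBounding u g ∧
      ∀ i, ∫⁻ x, ((g i x - ρ i x) + (ρ i x - g i x)) ∂μ < ENNReal.ofReal ε :=
  statement8_general μ u ρ hρ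

end BVAMPaper
end
end

section
/- Let X = [-1,1] with Lebesgue measure and Y = ({0}×[0,1]) ∪ ([0,1]×{1}) ∪ ({1}×[0,1]) ⊂ ℝ² with the Euclidean metric. Define u(x) = (0,0) for −1 ≤ x ≤ 0 and u(x) = (1,0) for 0 < x ≤ 1. Then for any sequence (u_k) in N^{1,1}(X:Y) with u_k → u in L¹, one has liminf_k ∫_X g_{u_k} dL¹ ≥ 14/5 > 1 = ‖D_AM u‖(X). In particular, the relaxed BV energy with respect to N^{1,1}(X:Y) strictly exceeds the AM-BV energy. -/
open MeasureTheory Filter Set Metric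
open scoped ENNReal NNReal Topology

noncomputable section

namespace BVAMPaper

variable {X : Type*} [MetricSpace X]

variable [MeasurableSpace X]

/-- The domain `[-1,1]` with Lebesgue measure. -/
def I14 : Type := Set.Icc (-1 : ℝ) 1

instance : MetricSpace I14 := by unfold I14; infer_instance
instance : MeasurableSpace I14 := by unfold I14; infer_instance

def μ14 : Measure I14 := Measure.comap Subtype.val volume

/-- The "staple" target set
`({0}×[0,1]) ∪ ([0,1]×{1}) ∪ ({1}×[0,1]) ⊂ ℝ²` with the Euclidean metric. -/
def S14 : Set (EuclideanSpace ℝ (Fin 2)) :=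
  {p | (p 0 = 0 ∧ p 1 ∈ Set.Icc (0:ℝ) 1) ∨ (p 1 = 1 ∧ p 0 ∈ Set.Icc (0:ℝ) 1) ∨
       (p 0 = 1 ∧ p 1 ∈ Set.Icc (0:ℝ) 1)}

def Y14 : Type := S14

instance : MetricSpace Y14 := by unfold Y14; infer_instance

lemma mem00 : (0 : EuclideanSpace ℝ (Fin 2)) ∈ S14 := by
  left; constructor <;> simp [S14]

lemma mem10 : (EuclideanSpace.single (0 : Fin 2) (1:ℝ)) ∈ S14 := by
  right; right
  constructor
  · simp [EuclideanSpace.single_apply]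
  · simp [EuclideanSpace.single_apply]

/-- `u(x) = (0,0)` for `-1 ≤ x ≤ 0` and `u(x) = (1,0)` for `0 < x ≤ 1`. -/
def u14 : I14 → Y14 := fun x =>
  if (show Set.Icc (-1:ℝ) 1 from x).1 ≤ 0 then ⟨0, mem00⟩
  else ⟨EuclideanSpace.single (0 : Fin 2) (1:ℝ), mem10⟩

/-!
The sequence `ρᵢ = (i + 1) 𝟙_{(0, 1/(i+1))}` is AM-bounding for `u14` with no exceptional curves:
a `1`-Lipschitz curve whose coordinate crosses the jump point `0` spends time at least
`1/(i+1)` in `(0, 1/(i+1))`. Conversely, the segment `[-1, 1]` sees all of the Lebesgue measure,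
so it cannot be exceptional, and `u14` jumps by `1` along it; hence `‖D_AM u14‖(X) = 1`.

For the relaxation, an upper gradient `g` of `v` with `∫ g < ∞` makes `v` continuous along
`[-1, 1]`, by absolute continuity of the integral, and bounds the distance between the values of
`v` at the ends of any subsegment by the integral of `g` over it. If `∫ d(v, u14) < 1/10`, then `v`
comes within `1/10` of `(0,0)` left of `0` and within `1/10` of `(1,0)` right of `0`. In between,
the path `v` in the staple has to climb the left leg to `(0,1)`, cross to `(1,1)` and descend the
right leg, so `∫ g ≥ 9/10 + 1 + 9/10 = 14/5`.
-/

/-- `r₀` is the last time at which `f ≤ α`, and `r₁` the first time after `r₀` at which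
`β ≤ f`. -/
theorem exists_Ioo_mapsTo_Ioo_of_crossing {f : ℝ → ℝ} {s t α β : ℝ} (hst : s ≤ t)
    (hf : ContinuousOn f (Icc s t)) (hs : f s ≤ α) (ht : β ≤ f t) (hαβ : α < β) :
    ∃ r₀ r₁, s ≤ r₀ ∧ r₀ < r₁ ∧ r₁ ≤ t ∧ f r₀ ≤ α ∧ β ≤ f r₁ ∧
      MapsTo f (Ioo r₀ r₁) (Ioo α β) := by
  obtain ⟨r₀, ⟨⟨hsr₀, hr₀t⟩, hr₀α : f r₀ ≤ α⟩, hr₀max⟩ :=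
    (isCompact_Icc.of_isClosed_subset (hf.preimage_isClosed_of_isClosed isClosed_Icc isClosed_Iic)
      inter_subset_left).exists_isGreatest ⟨s, ⟨le_rfl, hst⟩, hs⟩
  obtain ⟨r₁, ⟨⟨hr₀r₁, hr₁t⟩, hr₁β : β ≤ f r₁⟩, hr₁min⟩ :=
    (isCompact_Icc.of_isClosed_subset
      ((hf.mono (Icc_subset_Icc_left hsr₀)).preimage_isClosed_of_isClosed isClosed_Icc
        isClosed_Ici) inter_subset_left).exists_isLeast ⟨t, ⟨hr₀t, le_rfl⟩, ht⟩
  refine ⟨r₀, r₁, hsr₀, hr₀r₁.lt_of_ne ?_, hr₁t, hr₀α, hr₁β, fun r ⟨h₀, h₁⟩ => ⟨?_, ?_⟩⟩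
  · rintro rfl; linarith
  · by_contra! h
    exact h₀.not_ge (hr₀max ⟨⟨hsr₀.trans h₀.le, h₁.le.trans hr₁t⟩, h⟩)
  · by_contra! h
    exact h₁.not_ge (hr₁min ⟨⟨h₀.le, h₁.le.trans hr₁t⟩, h⟩)

theorem exists_Ioo_mapsTo_Ioo_of_lipschitzOnWith {f : ℝ → ℝ} {s t α β : ℝ} (hst : s ≤ t)
    (hf : LipschitzOnWith 1 f (Icc s t)) (hs : f s ≤ α) (ht : β ≤ f t) (hαβ : α < β) :
    ∃ r₀ r₁, Ioo r₀ r₁ ⊆ Icc s t ∧ β - α ≤ r₁ - r₀ ∧ MapsTo f (Ioo r₀ r₁) (Ioo α β) := by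
  obtain ⟨r₀, r₁, hsr₀, hr₀r₁, hr₁t, hr₀, hr₁, hmaps⟩ :=
    exists_Ioo_mapsTo_Ioo_of_crossing hst hf.continuousOn hs ht hαβ
  have hdist := hf.dist_le_mul r₁ ⟨hsr₀.trans hr₀r₁.le, hr₁t⟩ r₀ ⟨hsr₀, hr₀r₁.le.trans hr₁t⟩
  rw [Real.dist_eq, Real.dist_eq, NNReal.coe_one, one_mul, abs_of_pos (sub_pos.2 hr₀r₁)] at hdist
  exact ⟨r₀, r₁, Ioo_subset_Icc_self.trans (Icc_subset_Icc hsr₀ hr₁t),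
    by linarith [le_abs_self (f r₁ - f r₀)], hmaps⟩

def spike (ε : ℝ) : ℝ → ℝ≥0∞ := (Ioo 0 ε).indicator fun _ => ENNReal.ofReal ε⁻¹

theorem measurable_spike (ε : ℝ) : Measurable (spike ε) :=
  measurable_const.indicator measurableSet_Ioo

theorem setLIntegral_spike {ε : ℝ} (hε : 0 < ε) {s : Set ℝ} (h : Ioo 0 ε ⊆ s) :
    ∫⁻ r in s, spike ε r = 1 := by
  rw [spike, lintegral_indicator_const measurableSet_Ioo, Measure.restrict_apply measurableSet_Ioo,
    inter_eq_left.2 h, Real.volume_Ioo, sub_zero, ← ENNReal.ofReal_mul (inv_nonneg.2 hε.le),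
    inv_mul_cancel₀ hε.ne', ENNReal.ofReal_one]

theorem one_le_setLIntegral_spike_comp {f : ℝ → ℝ} {s t ε : ℝ} (hst : s ≤ t)
    (hf : LipschitzOnWith 1 f (Icc s t)) (hε : 0 < ε)
    (hcross : (f s ≤ 0 ∧ ε ≤ f t) ∨ (f t ≤ 0 ∧ ε ≤ f s)) :
    1 ≤ ∫⁻ r in Icc s t, spike ε (f r) := by
  obtain ⟨r₀, r₁, hsub, hlen, hmaps⟩ :
      ∃ r₀ r₁, Ioo r₀ r₁ ⊆ Icc s t ∧ ε ≤ r₁ - r₀ ∧ MapsTo f (Ioo r₀ r₁) (Ioo 0 ε) := by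
    rcases hcross with ⟨hs, ht⟩ | ⟨ht, hs⟩
    · simpa using exists_Ioo_mapsTo_Ioo_of_lipschitzOnWith hst hf hs ht hε
    · obtain ⟨r₀, r₁, hsub, hlen, hmaps⟩ := exists_Ioo_mapsTo_Ioo_of_lipschitzOnWith
        (f := fun r => -f r) hst hf.neg (neg_le_neg hs) (neg_nonneg.2 ht) (neg_neg_of_pos hε)
      refine ⟨r₀, r₁, hsub, by linarith, fun r hr => ?_⟩
      obtain ⟨h₀, h₁⟩ := hmaps hr
      exact ⟨by linarith, by linarith⟩
  calc 1 = ENNReal.ofReal ε⁻¹ * ENNReal.ofReal ε := by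
        rw [← ENNReal.ofReal_mul (inv_nonneg.2 hε.le), inv_mul_cancel₀ hε.ne', ENNReal.ofReal_one]
    _ ≤ ENNReal.ofReal ε⁻¹ * volume (Ioo r₀ r₁) := by
        rw [Real.volume_Ioo]; gcongr
    _ = ∫⁻ r in Ioo r₀ r₁, spike ε (f r) := by
        rw [← setLIntegral_const]
        exact setLIntegral_congr_fun measurableSet_Ioo fun r hr =>
          (indicator_of_mem (hmaps hr) fun _ => ENNReal.ofReal ε⁻¹).symm
    _ ≤ ∫⁻ r in Icc s t, spike ε (f r) := lintegral_mono_set hsub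

theorem setLIntegral_comp_const_add_Icc (F : ℝ → ℝ≥0∞) (a s t : ℝ) :
    ∫⁻ r in Icc s t, F (a + r) = ∫⁻ r in Icc (a + s) (a + t), F r := by
  have := (measurePreserving_add_left volume a).setLIntegral_comp_preimage_emb
    (MeasurableEquiv.addLeft a).measurableEmbedding F (Icc (a + s) (a + t))
  rwa [preimage_const_add_Icc, add_sub_cancel_left, add_sub_cancel_left] at this

theorem setLIntegral_Icc_add_Icc {f : ℝ → ℝ≥0∞} {a b c : ℝ} (hab : a ≤ b) (hbc : b ≤ c) :
    (∫⁻ r in Icc a b, f r) + ∫⁻ r in Icc b c, f r = ∫⁻ r in Icc a c, f r := by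
  simp only [← setLIntegral_congr Ioc_ae_eq_Icc]
  rw [← Ioc_union_Ioc_eq_Ioc hab hbc,
    lintegral_union measurableSet_Ioc (Ioc_disjoint_Ioc_of_le le_rfl)]

theorem exists_lt_of_setLIntegral_lt {α : Type*} [MeasurableSpace α] {μ : Measure α}
    {g : α → ℝ≥0∞} {s : Set α} (hs : MeasurableSet s) {c : ℝ≥0∞}
    (h : ∫⁻ x in s, g x ∂μ < c * μ s) : ∃ x ∈ s, g x < c := by
  by_contra! hle
  exact h.not_ge ((setLIntegral_const s c).symm.trans_le (setLIntegral_mono' hs hle))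

section LineIntegralBound

variable {E : Type*} [PseudoEMetricSpace E] {V : ℝ → E} {f : ℝ → ℝ≥0∞} {a b : ℝ}

theorem continuousOn_Icc_of_edist_le_setLIntegral (hf : ∫⁻ r in Icc a b, f r ≠ ∞)
    (hV : ∀ x ∈ Icc a b, ∀ y ∈ Icc a b, x ≤ y → edist (V x) (V y) ≤ ∫⁻ r in Icc x y, f r) :
    ContinuousOn V (Icc a b) := by
  intro x hx
  have hbound : ∀ y ∈ Icc a b,
      edist (V y) (V x) ≤ ∫⁻ r in uIcc x y, f r ∂(volume.restrict (Icc a b)) := by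
    intro y hy
    rw [Measure.restrict_restrict measurableSet_uIcc, inter_eq_left.2 (uIcc_subset_Icc hx hy)]
    rcases le_total x y with hxy | hyx
    · rw [edist_comm, uIcc_of_le hxy]; exact hV x hx y hy hxy
    · rw [uIcc_of_ge hyx]; exact hV y hy x hx hyx
  have hvol : Tendsto (fun y => volume.restrict (Icc a b) (uIcc x y)) (𝓝[Icc a b] x) (𝓝 0) := by
    refine tendsto_of_tendsto_of_tendsto_of_le_of_le tendsto_const_nhds ?_ (fun _ => zero_le)
      fun y => Measure.restrict_apply_le _ _
    have : Tendsto (fun y => ENNReal.ofReal |y - x|) (𝓝 x) (𝓝 0) :=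
      (ENNReal.continuous_ofReal.comp (continuous_id.sub continuous_const).abs).tendsto' x 0
        (by simp)
    simpa only [Real.volume_interval] using tendsto_nhdsWithin_of_tendsto_nhds this
  rw [ContinuousWithinAt, tendsto_iff_edist_tendsto_0]
  exact tendsto_of_tendsto_of_tendsto_of_le_of_le' tendsto_const_nhds
    (tendsto_setLIntegral_zero hf hvol)
    (.of_forall fun _ => zero_le) (eventually_nhdsWithin_of_forall hbound)

theorem edist_add_edist_add_edist_le_setLIntegral
    (hV : ∀ x ∈ Icc a b, ∀ y ∈ Icc a b, x ≤ y → edist (V x) (V y) ≤ ∫⁻ r in Icc x y, f r)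
    {r₀ r₁ : ℝ} (h₀ : a ≤ r₀) (h₀₁ : r₀ ≤ r₁) (h₁ : r₁ ≤ b) :
    edist (V a) (V r₀) + edist (V r₀) (V r₁) + edist (V r₁) (V b) ≤ ∫⁻ r in Icc a b, f r := by
  have ha : a ∈ Icc a b := ⟨le_rfl, h₀.trans (h₀₁.trans h₁)⟩
  have hb : b ∈ Icc a b := ⟨ha.2, le_rfl⟩
  have hr₀ : r₀ ∈ Icc a b := ⟨h₀, h₀₁.trans h₁⟩
  have hr₁ : r₁ ∈ Icc a b := ⟨h₀.trans h₀₁, h₁⟩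
  rw [← setLIntegral_Icc_add_Icc (h₀.trans h₀₁) h₁, ← setLIntegral_Icc_add_Icc h₀ h₀₁]
  exact add_le_add (add_le_add (hV a ha r₀ hr₀ h₀) (hV r₀ hr₀ r₁ hr₁ h₀₁)) (hV r₁ hr₁ b hb h₁)

end LineIntegralBound

theorem Curve.integralOn_le_integral {X : Type*} [MetricSpace X] (γ : Curve X) {s t : ℝ}
    (hs : 0 ≤ s) (ht : t ≤ γ.len) (ρ : X → ℝ≥0∞) : γ.integralOn s t ρ ≤ γ.integral ρ :=
  lintegral_mono_set (Icc_subset_Icc hs ht)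

section CurveFamilies

variable {X : Type*} [MetricSpace X] [MeasurableSpace X] {μ : Measure X}

theorem AM_empty : AM μ (∅ : Set (Curve X)) = 0 :=
  nonpos_iff_eq_zero.1 <| iInf₂_le_of_le (fun _ _ => 0)
    ⟨fun _ => measurable_const, fun _ h => h.elim⟩ (by simp)

theorem one_le_AM_of_mem {Γ : Set (Curve X)} {γ : Curve X} (hγ : γ ∈ Γ)
    (h : ∀ σ : X → ℝ≥0∞, γ.integral σ ≤ ∫⁻ x, σ x ∂μ) : 1 ≤ AM μ Γ :=
  le_iInf₂ fun _ hσ => (hσ.2 γ hγ).trans (liminf_le_liminf (.of_forall fun _ => h _))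

theorem edist_le_liminf_of_AMBoundingOn {Y : Type*} [EMetricSpace Y] {u : X → Y}
    {ρ : ℕ → X → ℝ≥0∞} (hρ : AMBoundingOn μ univ u ρ) {γ : Curve X}
    (hγ : ∀ σ : X → ℝ≥0∞, γ.integral σ ≤ ∫⁻ x, σ x ∂μ) {τ : ℝ} (hτ : τ ∈ Ioo 0 γ.len)
    {y₀ y₁ : Y} (h₀ : ∀ s ∈ Icc 0 τ, u (γ.toFun s) = y₀)
    (h₁ : ∀ t ∈ Ioc τ γ.len, u (γ.toFun t) = y₁) :
    edist y₀ y₁ ≤ atTop.liminf fun i => ∫⁻ x, ρ i x ∂μ := by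
  obtain ⟨-, Γ, hΓ, hbound⟩ := hρ
  have hγΓ : γ ∉ Γ := fun hmem => by simpa [hΓ] using one_le_AM_of_mem hmem hγ
  obtain ⟨N, hN, hbound⟩ := hbound γ hγΓ fun _ _ => mem_univ _
  obtain ⟨s, ⟨hs, hsN⟩⟩ : (Icc 0 τ \ N).Nonempty :=
    nonempty_of_measure_ne_zero (μ := volume) (by simp [measure_sdiff_null hN, hτ.1])
  obtain ⟨t, ⟨ht, htN⟩⟩ : (Ioc τ γ.len \ N).Nonempty :=
    nonempty_of_measure_ne_zero (μ := volume) (by simp [measure_sdiff_null hN, hτ.2])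
  calc edist y₀ y₁ = edist (u (γ.toFun s)) (u (γ.toFun t)) := by rw [h₀ s hs, h₁ t ht]
    _ ≤ atTop.liminf fun i => γ.integralOn s t (ρ i) :=
      hbound s t ⟨hs.1, hs.2.trans hτ.2.le⟩ ⟨hτ.1.le.trans ht.1.le, ht.2⟩ hsN htN
        (hs.2.trans_lt ht.1)
    _ ≤ atTop.liminf fun i => ∫⁻ x, ρ i x ∂μ :=
      liminf_le_liminf (.of_forall fun i =>
        (γ.integralOn_le_integral hs.1 ht.2 _).trans (hγ _))

end CurveFamilies

section IntervalDomain

variable {c d : ℝ} (hcd : c ≤ d)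

/-- `projIcc` is the identity on the relevant range; it only serves to land in `Icc c d`. -/
def Curve.segment {a b : ℝ} (hab : a < b) (ha : c ≤ a) (hb : b ≤ d) : Curve (Icc c d) where
  len := b - a
  len_pos := sub_pos.2 hab
  toFun r := projIcc c d hcd (a + r)
  lip := by
    simpa [Function.comp_def] using
      ((LipschitzWith.projIcc hcd).comp (isometry_add_left a).lipschitz).lipschitzOnWith
  nonconst := ⟨0, by simp [hab.le], b - a, by simp [hab.le], by
    simp only [add_zero, add_sub_cancel]
    rw [projIcc_of_mem _ ⟨ha, hab.le.trans hb⟩, projIcc_of_mem _ ⟨ha.trans hab.le, hb⟩]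
    exact fun h => hab.ne (congrArg Subtype.val h)⟩

theorem Curve.integral_segment {a b : ℝ} (hab : a < b) (ha : c ≤ a) (hb : b ≤ d)
    (ρ : Icc c d → ℝ≥0∞) :
    (Curve.segment hcd hab ha hb).integral ρ = ∫⁻ r in Icc a b, IccExtend hcd ρ r := by
  change ∫⁻ r in Icc 0 (b - a), IccExtend hcd ρ (a + r) = _
  rw [setLIntegral_comp_const_add_Icc, add_zero, add_sub_cancel]

theorem lintegral_comap_val_Icc (g : Icc c d → ℝ≥0∞) :
    ∫⁻ x, g x ∂(volume.comap Subtype.val) = ∫⁻ r in Icc c d, IccExtend hcd g r := by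
  rw [← lintegral_subtype_comap measurableSet_Icc]
  simp [IccExtend_val]

theorem edist_IccExtend_le_of_isUpperGradient {Y : Type*} [EMetricSpace Y] {v : Icc c d → Y}
    {g : Icc c d → ℝ≥0∞} (hv : IsUpperGradient v g) {a b : ℝ} (hab : a ≤ b) (ha : c ≤ a)
    (hb : b ≤ d) :
    edist (IccExtend hcd v a) (IccExtend hcd v b) ≤ ∫⁻ r in Icc a b, IccExtend hcd g r := by
  rcases hab.eq_or_lt with rfl | hab
  · simp
  · have := hv (Curve.segment hcd hab ha hb)
    rw [Curve.integral_segment, edist_comm] at this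
    simpa [Curve.segment, IccExtend] using this

end IntervalDomain

theorem abs_sub_apply_le_dist (p q : EuclideanSpace ℝ (Fin 2)) (i : Fin 2) :
    |p i - q i| ≤ dist p q := by
  simpa [Real.dist_eq] using PiLp.dist_apply_le p q i

theorem S14.apply_one_eq_one {p : EuclideanSpace ℝ (Fin 2)} (hp : p ∈ S14)
    (h : p 0 ∈ Ioo 0 1) : p 1 = 1 := by
  rcases hp with ⟨h0, -⟩ | ⟨h1, -⟩ | ⟨h0, -⟩
  · exact absurd h0 h.1.ne'
  · exact h1
  · exact absurd h0 h.2.ne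

theorem S14.apply_zero_eq_zero_or_one {p : EuclideanSpace ℝ (Fin 2)} (hp : p ∈ S14)
    (h : p 1 < 1) : p 0 = 0 ∨ p 0 = 1 := by
  rcases hp with ⟨h0, -⟩ | ⟨h1, -⟩ | ⟨h0, -⟩
  · exact .inl h0
  · exact absurd h1 h.ne
  · exact .inr h0

theorem S14.apply_zero_eq_of_dist_lt {p q : EuclideanSpace ℝ (Fin 2)} (hp : p ∈ S14)
    (hq : q 0 = 0 ∨ q 0 = 1) (hq₁ : q 1 = 0) (hd : dist p q < 1/10) :
    p 0 = q 0 ∧ p 1 < 1/10 := by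
  have h₀ := (abs_sub_apply_le_dist p q 0).trans_lt hd
  have h₁ := (abs_sub_apply_le_dist p q 1).trans_lt hd
  rw [hq₁, sub_zero] at h₁
  have hp₁ : p 1 < 1/10 := (le_abs_self _).trans_lt h₁
  refine ⟨?_, hp₁⟩
  rcases S14.apply_zero_eq_zero_or_one hp (by linarith) with h | h <;>
    rcases hq with h' | h' <;> rw [h, h'] at h₀ ⊢ <;> norm_num at h₀

/-- `r₀` and `r₁` are the times at which the path passes the corners `(0,1)` and `(1,1)`. -/
theorem exists_fourteen_fifths_le_dist_of_mapsTo_S14 {V : ℝ → EuclideanSpace ℝ (Fin 2)}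
    {a b : ℝ} (hab : a ≤ b) (hV : ContinuousOn V (Icc a b)) (hS : MapsTo V (Icc a b) S14)
    (ha : dist (V a) 0 < 1/10) (hb : dist (V b) (EuclideanSpace.single 0 1) < 1/10) :
    ∃ r₀ r₁, a ≤ r₀ ∧ r₀ ≤ r₁ ∧ r₁ ≤ b ∧
      14/5 ≤ dist (V a) (V r₀) + dist (V r₀) (V r₁) + dist (V r₁) (V b) := by
  obtain ⟨ha₀, ha₁⟩ := S14.apply_zero_eq_of_dist_lt (hS ⟨le_rfl, hab⟩) (by simp) (by simp) ha
  obtain ⟨hb₀, hb₁⟩ := S14.apply_zero_eq_of_dist_lt (hS ⟨hab, le_rfl⟩) (by simp) (by simp) hb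
  norm_num at ha₀ hb₀
  obtain ⟨r₀, r₁, har₀, hr₀₁, hr₁b, hr₀ : V r₀ 0 ≤ 0, hr₁ : 1 ≤ V r₁ 0, hmaps⟩ :=
    exists_Ioo_mapsTo_Ioo_of_crossing hab (f := fun r => V r 0) (by fun_prop)
      ha₀.le hb₀.ge one_pos
  have hV' := hV.mono (Icc_subset_Icc har₀ hr₁b)
  have htop : EqOn (fun r => V r 1) 1 (Icc r₀ r₁) :=
    EqOn.of_subset_closure (fun r hr => S14.apply_one_eq_one
        (hS ⟨har₀.trans hr.1.le, hr.2.le.trans hr₁b⟩) (hmaps hr))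
      (by fun_prop) continuousOn_const Ioo_subset_Icc_self (closure_Ioo hr₀₁.ne).ge
  have h₁ := abs_sub_apply_le_dist (V r₀) (V a) 1
  have h₂ := abs_sub_apply_le_dist (V r₁) (V r₀) 0
  have h₃ := abs_sub_apply_le_dist (V r₁) (V b) 1
  rw [dist_comm] at h₁ h₂
  have e₀ : V r₀ 1 = 1 := htop ⟨le_rfl, hr₀₁.le⟩
  have e₁ : V r₁ 1 = 1 := htop ⟨hr₀₁.le, le_rfl⟩
  rw [e₀] at h₁
  rw [e₁] at h₃
  refine ⟨r₀, r₁, har₀, hr₀₁.le, hr₁b, ?_⟩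
  linarith [le_abs_self (1 - V a 1), le_abs_self (V r₁ 0 - V r₀ 0), le_abs_self (1 - V b 1)]

theorem lintegral_μ14 (g : I14 → ℝ≥0∞) :
    ∫⁻ x, g x ∂μ14 = ∫⁻ r in Icc (-1) 1, IccExtend (by norm_num) g r :=
  lintegral_comap_val_Icc _ g

theorem μ14_preimage_val (t : Set ℝ) :
    μ14 {x : I14 | x.1 ∈ t} = volume (Icc (-1) 1 ∩ t) := by
  change (volume.comap Subtype.val) (Subtype.val ⁻¹' t : Set (Icc (-1 : ℝ) 1)) = _
  rw [(MeasurableEmbedding.subtype_coe measurableSet_Icc).comap_apply, Subtype.image_preimage_coe]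

theorem u14_of_nonpos {x : I14} (h : x.1 ≤ 0) : u14 x = ⟨0, mem00⟩ := if_pos h

theorem u14_of_pos {x : I14} (h : 0 < x.1) :
    u14 x = ⟨EuclideanSpace.single 0 1, mem10⟩ := if_neg h.not_ge

theorem u14_eq_of_iff {x y : I14} (h : x.1 ≤ 0 ↔ y.1 ≤ 0) : u14 x = u14 y := by
  unfold u14; simp only [h]

theorem edist_u14_jump :
    edist (⟨0, mem00⟩ : Y14) ⟨EuclideanSpace.single 0 1, mem10⟩ = 1 := by
  change edist (0 : EuclideanSpace ℝ (Fin 2)) (EuclideanSpace.single 0 1) = 1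
  simp [edist_dist]

theorem edist_u14_le_one (x y : I14) : edist (u14 x) (u14 y) ≤ 1 := by
  rcases le_or_gt x.1 0 with hx | hx <;> rcases le_or_gt y.1 0 with hy | hy
  · simp [u14_eq_of_iff (iff_of_true hx hy)]
  · rw [u14_of_nonpos hx, u14_of_pos hy]; exact edist_u14_jump.le
  · rw [u14_of_pos hx, u14_of_nonpos hy]; exact (edist_comm _ _).trans_le edist_u14_jump.le
  · simp [u14_eq_of_iff (iff_of_false hx.not_ge hy.not_ge)]

def ρ14 (i : ℕ) (x : I14) : ℝ≥0∞ := spike ((i : ℝ) + 1)⁻¹ x.1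

theorem lintegral_ρ14 (i : ℕ) : ∫⁻ x, ρ14 i x ∂μ14 = 1 := by
  have hε : (0 : ℝ) < ((i : ℝ) + 1)⁻¹ := by positivity
  have hε₁ : ((i : ℝ) + 1)⁻¹ ≤ 1 := inv_le_one_of_one_le₀ (by simp)
  rw [lintegral_μ14, setLIntegral_congr_fun measurableSet_Icc fun r hr =>
    IccExtend_of_mem _ (ρ14 i) hr]
  exact setLIntegral_spike hε (Ioo_subset_Icc_self.trans (Icc_subset_Icc (by norm_num) hε₁))

theorem AMBoundingOn_ρ14 : AMBoundingOn μ14 univ u14 ρ14 := by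
  refine ⟨fun i => (measurable_spike _).comp measurable_subtype_coe, ∅, AM_empty,
    fun γ _ _ => ⟨∅, measure_empty, fun s t hs ht _ _ hst => ?_⟩⟩
  set f : ℝ → ℝ := fun r => (γ.toFun r).1
  have hf : LipschitzOnWith 1 f (Icc s t) := by
    have := (LipschitzWith.subtype_val _).comp_lipschitzOnWith
      (γ.lip.mono (Icc_subset_Icc hs.1 ht.2))
    rwa [one_mul] at this
  by_cases hcross : (f s ≤ 0 ∧ 0 < f t) ∨ (f t ≤ 0 ∧ 0 < f s)
  · obtain ⟨n, hn⟩ := exists_nat_one_div_lt (lt_max_iff.2 (hcross.imp (·.2) (·.2)).symm)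
    refine (edist_u14_le_one _ _).trans (le_liminf_of_le (by isBoundedDefault) ?_)
    filter_upwards [eventually_ge_atTop n] with i hi
    have hε : ((i : ℝ) + 1)⁻¹ < max (f s) (f t) := by
      refine lt_of_le_of_lt ?_ hn
      rw [one_div]; gcongr
    refine one_le_setLIntegral_spike_comp hst.le hf (by positivity) ?_
    rcases lt_max_iff.1 hε with h | h <;> rcases hcross with h' | h' <;>
      first | exact Or.inl ⟨h'.1, by linarith⟩ | exact Or.inr ⟨h'.1, by linarith⟩
  · simp only [← not_le] at hcross
    have : u14 (γ.toFun s) = u14 (γ.toFun t) := u14_eq_of_iff (by tauto)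
    rw [this, edist_self]
    exact zero_le

theorem DAM_μ14_u14 : DAM μ14 u14 = 1 := by
  refine le_antisymm ((iInf₂_le ρ14 AMBoundingOn_ρ14).trans (by simp [lintegral_ρ14])) ?_
  refine le_iInf₂ fun ρ hρ => ?_
  set γ : Curve I14 := Curve.segment (by norm_num) (by norm_num : (-1 : ℝ) < 1) le_rfl le_rfl
  have hγ : ∀ σ : I14 → ℝ≥0∞, γ.integral σ ≤ ∫⁻ x, σ x ∂μ14 := fun σ =>
    ((Curve.integral_segment _ _ _ _ σ).trans (lintegral_μ14 σ).symm).le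
  have hγ_apply : ∀ r ∈ Icc (0 : ℝ) 2, (γ.toFun r).1 = -1 + r := fun r hr => by
    change (projIcc (-1 : ℝ) 1 (by norm_num) (-1 + r) : ℝ) = _
    rw [projIcc_of_mem _ ⟨by linarith [hr.1], by linarith [hr.2]⟩]
  have hlen : γ.len = 2 := by norm_num [γ, Curve.segment]
  have hjump := edist_le_liminf_of_AMBoundingOn hρ hγ (τ := 1) (by norm_num [hlen])
    (fun s hs => u14_of_nonpos (by rw [hγ_apply s ⟨hs.1, by linarith [hs.2]⟩]; linarith [hs.2]))
    (fun t ht => u14_of_pos (by rw [hγ_apply t ⟨by linarith [ht.1], hlen ▸ ht.2⟩]; linarith [ht.1]))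
  simp only [Measure.restrict_univ]
  exact edist_u14_jump.symm.trans_le hjump

theorem exists_edist_u14_lt {v : I14 → Y14}
    (hv : ∫⁻ x, edist (v x) (u14 x) ∂μ14 < ENNReal.ofReal (1/10)) {t : Set ℝ}
    (ht : MeasurableSet t) (hvol : volume (Icc (-1) 1 ∩ t) = 1) :
    ∃ x : I14, x.1 ∈ t ∧ edist (v x) (u14 x) < ENNReal.ofReal (1/10) := by
  refine exists_lt_of_setLIntegral_lt (μ := μ14) (s := {x : I14 | x.1 ∈ t})
    (measurable_subtype_coe ht) ?_
  rw [μ14_preimage_val, hvol, mul_one]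
  exact (setLIntegral_le_lintegral _ _).trans_lt hv

theorem exists_dist_lt_of_lintegral_edist_u14_lt {v : I14 → Y14}
    (hv : ∫⁻ x, edist (v x) (u14 x) ∂μ14 < ENNReal.ofReal (1/10)) :
    ∃ x y : I14, x.1 ≤ y.1 ∧ dist (v x).1 0 < 1/10 ∧
      dist (v y).1 (EuclideanSpace.single 0 1) < 1/10 := by
  obtain ⟨x, hx, hxv⟩ := exists_edist_u14_lt hv (t := Icc (-1) 0) measurableSet_Icc
    (by rw [inter_eq_right.2 (Icc_subset_Icc le_rfl zero_le_one), Real.volume_Icc]; norm_num)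
  obtain ⟨y, hy, hyv⟩ := exists_edist_u14_lt hv (t := Ioc 0 1) measurableSet_Ioc
    (by rw [inter_eq_right.2 (Ioc_subset_Icc_self.trans (Icc_subset_Icc (by norm_num) le_rfl)),
      Real.volume_Ioc]; norm_num)
  rw [u14_of_nonpos hx.2] at hxv
  rw [u14_of_pos hy.1] at hyv
  exact ⟨x, y, hx.2.trans hy.1.le, edist_lt_ofReal.1 hxv, edist_lt_ofReal.1 hyv⟩

theorem fourteen_fifths_le_lintegral {v : I14 → Y14} {g : I14 → ℝ≥0∞}
    (hv : IsUpperGradient v g) (hL1 : ∫⁻ x, edist (v x) (u14 x) ∂μ14 < ENNReal.ofReal (1/10)) :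
    14/5 ≤ ∫⁻ x, g x ∂μ14 := by
  have h : (-1 : ℝ) ≤ 1 := by norm_num
  set V : ℝ → EuclideanSpace ℝ (Fin 2) := fun r => (IccExtend h v r).1
  have hV : ∀ x ∈ Icc (-1 : ℝ) 1, ∀ y ∈ Icc (-1 : ℝ) 1, x ≤ y →
      edist (V x) (V y) ≤ ∫⁻ r in Icc x y, IccExtend h g r := fun x hx y hy hxy =>
    edist_IccExtend_le_of_isUpperGradient h hv hxy hx.1 hy.2
  rcases eq_or_ne (∫⁻ x, g x ∂μ14) ∞ with hfin | hfin
  · simp [hfin]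
  rw [lintegral_μ14] at hfin ⊢
  obtain ⟨x, y, hxy, hdx, hdy⟩ := exists_dist_lt_of_lintegral_edist_u14_lt hL1
  have hVx : V x.1 = (v x).1 := congrArg Subtype.val (IccExtend_val h v x)
  have hVy : V y.1 = (v y).1 := congrArg Subtype.val (IccExtend_val h v y)
  have hsub : Icc x.1 y.1 ⊆ Icc (-1) 1 := Icc_subset_Icc x.2.1 y.2.2
  obtain ⟨r₀, r₁, h₀, h₀₁, h₁, hdist⟩ :=
    exists_fourteen_fifths_le_dist_of_mapsTo_S14 hxy
      ((continuousOn_Icc_of_edist_le_setLIntegral hfin hV).mono hsub)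
      (fun r _ => (IccExtend h v r).2) (hVx ▸ hdx) (hVy ▸ hdy)
  calc (14/5 : ℝ≥0∞) = ENNReal.ofReal (14/5) := by
        rw [ENNReal.ofReal_div_of_pos (by norm_num)]; norm_num
    _ ≤ ENNReal.ofReal (dist (V x.1) (V r₀) + dist (V r₀) (V r₁) + dist (V r₁) (V y.1)) :=
      ENNReal.ofReal_le_ofReal hdist
    _ = edist (V x.1) (V r₀) + edist (V r₀) (V r₁) + edist (V r₁) (V y.1) := by
      simp only [edist_dist]
      rw [ENNReal.ofReal_add (by positivity) dist_nonneg,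
        ENNReal.ofReal_add dist_nonneg dist_nonneg]
    _ ≤ ∫⁻ r in Icc x.1 y.1, IccExtend h g r :=
      edist_add_edist_add_edist_le_setLIntegral
        (fun p hp q hq => hV p (hsub hp) q (hsub hq)) h₀ h₀₁ h₁
    _ ≤ ∫⁻ r in Icc (-1) 1, IccExtend h g r := lintegral_mono_set hsub

/-- Any `L¹`-approximation of `u14` by `N^{1,1}` maps into the staple `Y14` has
energies with liminf at least `14/5`, while `‖D_AM u14‖(X) = 1`: the relaxed
`BV` energy with respect to `N^{1,1}(X:Y)` strictly exceeds the AM-BV energy. -/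
theorem statement14 :
    DAM μ14 u14 = 1 ∧
      ∀ (v : ℕ → I14 → Y14) (g : ℕ → I14 → ℝ≥0∞),
        (∀ k, MemL1 μ14 (v k) ∧ Measurable (g k) ∧ IsUpperGradient (v k) (g k)) →
        Tendsto (fun k => ∫⁻ x, edist (v k x) (u14 x) ∂μ14) atTop (nhds 0) →
          (14 / 5 : ℝ≥0∞) ≤ Filter.atTop.liminf fun k => ∫⁻ x, g k x ∂μ14 := by
  refine ⟨DAM_μ14_u14, fun v g hvg hv => le_liminf_of_le (by isBoundedDefault) ?_⟩
  filter_upwards [hv.eventually_lt_const (ENNReal.ofReal_pos.2 (by norm_num : (0 : ℝ) < 1/10))]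
    with k hk
  exact fourteen_fifths_le_lintegral (hvg k).2.2 hk

end BVAMPaper
end
end
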